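/- arXiv:1809.03430 — 3 statements merged into one kernel-verified Lean document; each statement's English description precedes it below -/
import Mathlib

section
/- Let $u$ and $m$ be probability densities on a bounded domain $\Omega$, and suppose $m_c$ is a measurable function with $m_c \le m - \eta$ on $\Omega$ for some constant $\eta > 0$. Then $\int_{[u > m]} (u - m)\,dx \ge \eta \, |[u \le m_c]|$, where $|\cdot|$ denotes Lebesgue measure. -/
/-!
Since `u` and `m` have the same mass, the excess `∫ (u - m)⁺` over `Ω` equals the
deficit `∫ (m - u)⁺`. On `[u ≤ m_c]` the deficit density `m - u` is at least `η`, so the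
deficit is at least `η |[u ≤ m_c]|`.
-/

open MeasureTheory

namespace MeasureTheory

variable {α : Type*} [MeasurableSpace α] {μ : Measure α} {s : Set α}

/-- Unlike `setIntegral_ge_of_const_le_real`, no finiteness of `μ s` is needed:
if `μ s = ∞` then `μ.real s = 0`. -/
theorem const_mul_measureReal_le_setIntegral {f : α → ℝ} {c : ℝ} (hc : 0 ≤ c)
    (hs : MeasurableSet s) (hf : ∀ x ∈ s, c ≤ f x) (hfi : IntegrableOn f s μ) :
    c * μ.real s ≤ ∫ x in s, f x ∂μ := by
  rw [mul_comm, ← smul_eq_mul, ← setIntegral_const]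
  exact integral_mono_of_nonneg (ae_of_all _ fun _ ↦ hc) hfi
    ((ae_restrict_iff' hs).2 (ae_of_all _ hf))

theorem setIntegral_deficit_le_setIntegral_excess {u m : α → ℝ} (hu : Measurable u)
    (hm : Measurable m) (hui : IntegrableOn u s μ) (hmi : IntegrableOn m s μ)
    (hmass : ∫ x in s, m x ∂μ ≤ ∫ x in s, u x ∂μ) :
    ∫ x in {x ∈ s | u x ≤ m x}, (m x - u x) ∂μ
      ≤ ∫ x in {x ∈ s | m x < u x}, (u x - m x) ∂μ := by
  have hsplit :=
    integral_inter_add_sdiff (f := fun x ↦ u x - m x) (measurableSet_lt hm hu) (hui.sub hmi)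
  have hdeficit : s \ {x | m x < u x} = {x ∈ s | u x ≤ m x} := by
    ext x
    simp [not_lt]
  rw [hdeficit, integral_sub hui hmi] at hsplit
  have hneg : ∫ x in {x ∈ s | u x ≤ m x}, (m x - u x) ∂μ
      = -∫ x in {x ∈ s | u x ≤ m x}, (u x - m x) ∂μ := by
    rw [← integral_neg]
    simp only [neg_sub]
  change _ ≤ ∫ x in s ∩ {x | m x < u x}, (u x - m x) ∂μ
  linarith

end MeasureTheory

theorem mass_excess_lower_bound_general {d : ℕ} (Ω : Set (Fin d → ℝ))
    (hΩ : MeasurableSet Ω)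
    (u m mc : (Fin d → ℝ) → ℝ)
    (hu_meas : Measurable u) (hm_meas : Measurable m) (hmc_meas : Measurable mc)
    (hu_int : IntegrableOn u Ω) (hm_int : IntegrableOn m Ω)
    (hu_mass : ∫ x in Ω, u x = 1) (hm_mass : ∫ x in Ω, m x = 1)
    (η : ℝ) (hη : 0 < η) (hgap : ∀ x ∈ Ω, mc x ≤ m x - η) :
    η * (volume {x ∈ Ω | u x ≤ mc x}).toReal
      ≤ ∫ x in {x ∈ Ω | m x < u x}, (u x - m x) := by
  set A := {x ∈ Ω | u x ≤ mc x}
  set D := {x ∈ Ω | u x ≤ m x}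
  have hAD : A ⊆ D := fun x hx ↦ ⟨hx.1, by linarith [hgap x hx.1, hx.2]⟩
  have hD : MeasurableSet D := hΩ.inter (measurableSet_le hu_meas hm_meas)
  have hdeficit_int : IntegrableOn (fun x ↦ m x - u x) D :=
    (hm_int.sub hu_int).mono_set (Set.sep_subset _ _)
  calc η * (volume A).toReal
      ≤ ∫ x in A, (m x - u x) :=
        const_mul_measureReal_le_setIntegral hη.le (hΩ.inter (measurableSet_le hu_meas hmc_meas))
          (fun x hx ↦ by linarith [hgap x hx.1, hx.2]) (hdeficit_int.mono_set hAD)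
    _ ≤ ∫ x in D, (m x - u x) :=
        setIntegral_mono_set hdeficit_int
          ((ae_restrict_iff' hD).2 (ae_of_all _ fun x hx ↦ sub_nonneg.2 hx.2))
          (Filter.Eventually.of_forall hAD)
    _ ≤ ∫ x in {x ∈ Ω | m x < u x}, (u x - m x) :=
        setIntegral_deficit_le_setIntegral_excess hu_meas hm_meas hu_int hm_int
          (hm_mass.trans hu_mass.symm).le

/-- If `u`, `m` are probability densities on `Ω` and `m_c ≤ m - η` on `Ω`,
then `∫_{[u>m]} (u-m) ≥ η |[u ≤ m_c]|`. -/
theorem mass_excess_lower_bound {d : ℕ} (Ω : Set (Fin d → ℝ))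
    (hΩ : MeasurableSet Ω) (hΩbd : Bornology.IsBounded Ω)
    (u m mc : (Fin d → ℝ) → ℝ)
    (hu_meas : Measurable u) (hm_meas : Measurable m) (hmc_meas : Measurable mc)
    (hu_nonneg : ∀ x ∈ Ω, 0 ≤ u x) (hm_nonneg : ∀ x ∈ Ω, 0 ≤ m x)
    (hmc_nonneg : ∀ x ∈ Ω, 0 ≤ mc x)
    (hu_int : IntegrableOn u Ω) (hm_int : IntegrableOn m Ω)
    (hu_mass : ∫ x in Ω, u x = 1) (hm_mass : ∫ x in Ω, m x = 1)
    (η : ℝ) (hη : 0 < η) (hgap : ∀ x ∈ Ω, mc x ≤ m x - η) :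
    η * (volume {x ∈ Ω | u x ≤ mc x}).toReal
      ≤ ∫ x in {x ∈ Ω | m x < u x}, (u x - m x) :=
  mass_excess_lower_bound_general Ω hΩ u m mc hu_meas hm_meas hmc_meas hu_int hm_int hu_mass hm_mass
    η hη hgap
end

section
/- Let $u$ and $m$ be probability densities on a bounded domain $\Omega$ with $m$ bounded, and let $m_c$ be a measurable function with $m_c \ge m + \eta$ on $\Omega$ for some $\eta > 0$. Then $|[u < m]| \ge \frac{\eta}{\sup_\Omega m} \, |[u \ge m_c]|$. -/
/-!
Write `f = u - m`. Since `u` and `m` have the same mass, the integral of `f` over `[f ≥ 0]`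
equals that of `-f` over `[f < 0] = [u < m]`. The first is at least `η |[f ≥ η]|` by Markov's
inequality, and `[u ≥ m_c] ⊆ [f ≥ η]`; the second is at most `sup m · |[u < m]|` because
`-f = m - u ≤ m` where `u ≥ 0`.
-/

open MeasureTheory

variable {α : Type*} [MeasurableSpace α] {μ : Measure α} {f : α → ℝ}

theorem setIntegral_setOf_nonneg_eq_of_integral_eq_zero (hf : Integrable f μ)
    (h0 : ∫ x, f x ∂μ = 0) :
    ∫ x in {x | 0 ≤ f x}, f x ∂μ = ∫ x in {x | f x < 0}, -f x ∂μ := by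
  have hsplit :=
    integral_add_compl₀ (nullMeasurableSet_lt hf.aemeasurable (aemeasurable_const (b := 0))) hf
  have hcompl : {x | f x < 0}ᶜ = {x | 0 ≤ f x} := by ext; simp
  rw [hcompl, h0] at hsplit
  rw [integral_neg]
  linarith

theorem mul_measureReal_le_setIntegral_setOf_nonneg {ε : ℝ} (hε : 0 ≤ ε) (hf : Integrable f μ) :
    ε * μ.real {x | ε ≤ f x} ≤ ∫ x in {x | 0 ≤ f x}, f x ∂μ := by
  have hsub : {x | ε ≤ f x} ⊆ {x | 0 ≤ f x} := fun x hx => hε.trans hx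
  have hnonneg : 0 ≤ᵐ[μ.restrict {x | 0 ≤ f x}] f :=
    ae_restrict_mem₀ (nullMeasurableSet_le aemeasurable_const hf.aemeasurable)
  have hmarkov := mul_meas_ge_le_integral_of_nonneg hnonneg hf.integrableOn ε
  rwa [measureReal_def, Measure.restrict_eq_self _ hsub, ← measureReal_def] at hmarkov

theorem mul_measureReal_le_mul_measureReal_of_integral_eq [IsFiniteMeasure μ] {u m : α → ℝ}
    (hu : Integrable u μ) (hm : Integrable m μ) (hmass : ∫ x, u x ∂μ = ∫ x, m x ∂μ)
    (hu_nonneg : 0 ≤ᵐ[μ] u) {S : ℝ} (hmS : ∀ᵐ x ∂μ, m x ≤ S) {η : ℝ} (hη : 0 ≤ η) :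
    η * μ.real {x | m x + η ≤ u x} ≤ S * μ.real {x | u x < m x} := by
  have hf : Integrable (u - m) μ := hu.sub hm
  have h0 : ∫ x, (u - m) x ∂μ = 0 := by
    simp only [Pi.sub_apply]
    rw [integral_sub hu hm, hmass, sub_self]
  calc η * μ.real {x | m x + η ≤ u x} = η * μ.real {x | η ≤ (u - m) x} := by
        simp only [Pi.sub_apply, le_sub_iff_add_le']
    _ ≤ ∫ x in {x | 0 ≤ (u - m) x}, (u - m) x ∂μ :=
        mul_measureReal_le_setIntegral_setOf_nonneg hη hf
    _ = ∫ x in {x | (u - m) x < 0}, -(u - m) x ∂μ :=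
        setIntegral_setOf_nonneg_eq_of_integral_eq_zero hf h0
    _ ≤ ∫ x in {x | (u - m) x < 0}, S ∂μ := by
        refine setIntegral_mono_ae hf.neg.integrableOn (integrableOn_const) ?_
        filter_upwards [hu_nonneg, hmS] with x hux hmx
        simp only [Pi.sub_apply, Pi.zero_apply] at hux ⊢
        linarith
    _ = S * μ.real {x | u x < m x} := by
        simp only [setIntegral_const, Pi.sub_apply, sub_neg, smul_eq_mul, mul_comm]

theorem sublevel_measure_lower_bound_general {d : ℕ} (Ω : Set (Fin d → ℝ))
    (hΩ : MeasurableSet Ω) (hΩbd : Bornology.IsBounded Ω)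
    (u m mc : (Fin d → ℝ) → ℝ)
    (hu_nonneg : ∀ x ∈ Ω, 0 ≤ u x)
    (hu_int : IntegrableOn u Ω) (hm_int : IntegrableOn m Ω)
    (hu_mass : ∫ x in Ω, u x = 1) (hm_mass : ∫ x in Ω, m x = 1)
    (η : ℝ) (hη : 0 < η) (hgap : ∀ x ∈ Ω, m x + η ≤ mc x)
    (S : ℝ) (hS : 0 < S) (hS_lub : IsLUB (m '' Ω) S) :
    (η / S) * (volume {x ∈ Ω | mc x ≤ u x}).toReal
      ≤ (volume {x ∈ Ω | u x < m x}).toReal := by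
  have hΩfin : volume Ω ≠ ⊤ := hΩbd.measure_lt_top.ne
  have : IsFiniteMeasure (volume.restrict Ω) := isFiniteMeasure_restrict.2 hΩfin
  have key := mul_measureReal_le_mul_measureReal_of_integral_eq hu_int hm_int
    (hu_mass.trans hm_mass.symm) (ae_restrict_of_forall_mem hΩ hu_nonneg)
    (ae_restrict_of_forall_mem hΩ fun x hx => hS_lub.1 ⟨x, hx, rfl⟩) hη.le
  rw [measureReal_restrict_apply' hΩ, measureReal_restrict_apply' hΩ] at key
  have hsub : {x ∈ Ω | mc x ≤ u x} ⊆ {x | m x + η ≤ u x} ∩ Ω :=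
    fun x hx => ⟨(hgap x hx.1).trans hx.2, hx.1⟩
  have hA : {x | u x < m x} ∩ Ω = {x ∈ Ω | u x < m x} := Set.inter_comm _ _
  rw [div_mul_eq_mul_div, div_le_iff₀ hS, ← hA]
  calc η * volume.real {x ∈ Ω | mc x ≤ u x}
      ≤ η * volume.real ({x | m x + η ≤ u x} ∩ Ω) := by
        gcongr
        exact measure_ne_top_of_subset Set.inter_subset_right hΩfin
    _ ≤ S * volume.real ({x | u x < m x} ∩ Ω) := key
    _ = _ := mul_comm _ _

/-- If `u`, `m` are probability densities on `Ω`, `m` bounded with supremum `S`,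
and `m_c ≥ m + η` on `Ω`, then `|[u < m]| ≥ (η / S) |[u ≥ m_c]|`. -/
theorem sublevel_measure_lower_bound {d : ℕ} (Ω : Set (Fin d → ℝ))
    (hΩ : MeasurableSet Ω) (hΩbd : Bornology.IsBounded Ω)
    (u m mc : (Fin d → ℝ) → ℝ)
    (hu_meas : Measurable u) (hm_meas : Measurable m) (hmc_meas : Measurable mc)
    (hu_nonneg : ∀ x ∈ Ω, 0 ≤ u x) (hm_nonneg : ∀ x ∈ Ω, 0 ≤ m x)
    (hmc_nonneg : ∀ x ∈ Ω, 0 ≤ mc x)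
    (hu_int : IntegrableOn u Ω) (hm_int : IntegrableOn m Ω)
    (hu_mass : ∫ x in Ω, u x = 1) (hm_mass : ∫ x in Ω, m x = 1)
    (η : ℝ) (hη : 0 < η) (hgap : ∀ x ∈ Ω, m x + η ≤ mc x)
    (S : ℝ) (hS : 0 < S) (hS_lub : IsLUB (m '' Ω) S) :
    (η / S) * (volume {x ∈ Ω | mc x ≤ u x}).toReal
      ≤ (volume {x ∈ Ω | u x < m x}).toReal :=
  sublevel_measure_lower_bound_general Ω hΩ hΩbd u m mc hu_nonneg hu_int hm_int hu_mass hm_mass η hη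
    hgap S hS hS_lub
end

section
/- (Structure of Lemma 2.11's key estimate.) Suppose $f \colon \overline\Omega \times (0,\infty) \to \mathbb{R}$ satisfies: there is $\lambda > 0$ such that $\xi |f(x,\xi)| \ge \lambda(\xi - m(x))$ whenever $\xi > m(x)$, where $m$ is a probability density. Then for any probability density $u$ on $\Omega$ and any $a \ge 0$, $\int_{[u>m]} (u - m)\,dx \le \lambda^{-1} \big(\int_{[u>m]} u(f(x,u) - a)^2\,dx\big)^{1/2}$. -/
/-!
On `[u > m]` the sign condition on `f` gives `|f| ≤ |f - a|`, so the growth bound yields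
`λ (u - m) ≤ u |f - a| = √u · √u |f - a|`. Cauchy–Schwarz then bounds the integral by
`(∫ u)^{1/2} (∫ u (f - a)²)^{1/2}`, and `∫_{[u>m]} u ≤ ∫_Ω u = 1`.
-/

open MeasureTheory

section WeightedCauchySchwarz

variable {α : Type*} [MeasurableSpace α] {μ : Measure α} {w g : α → ℝ}

theorem memLp_two_sqrt_mul_of_integrable_mul_sq (hw : 0 ≤ᵐ[μ] w)
    (hw_meas : AEStronglyMeasurable w μ) (hg : AEStronglyMeasurable g μ)
    (hwg : Integrable (fun x => w x * g x ^ 2) μ) :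
    MemLp (fun x => √(w x) * g x) 2 μ := by
  refine (memLp_two_iff_integrable_sq
    ((Real.continuous_sqrt.comp_aestronglyMeasurable hw_meas).mul hg)).2 (hwg.congr ?_)
  filter_upwards [hw] with x hx
  rw [Pi.mul_apply, mul_pow, Real.sq_sqrt hx]

theorem memLp_two_sqrt_of_integrable (hw : 0 ≤ᵐ[μ] w) (hwi : Integrable w μ) :
    MemLp (fun x => √(w x)) 2 μ := by
  simpa using memLp_two_sqrt_mul_of_integrable_mul_sq (g := 1) hw hwi.1
    aestronglyMeasurable_const (by simpa using hwi)

theorem memLp_two_sqrt_mul_abs_of_integrable_mul_sq (hw : 0 ≤ᵐ[μ] w)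
    (hw_meas : AEStronglyMeasurable w μ) (hg : AEStronglyMeasurable g μ)
    (hwg : Integrable (fun x => w x * g x ^ 2) μ) :
    MemLp (fun x => √(w x) * |g x|) 2 μ :=
  memLp_two_sqrt_mul_of_integrable_mul_sq hw hw_meas
    (continuous_abs.comp_aestronglyMeasurable hg) (by simpa only [sq_abs] using hwg)

theorem integrable_mul_abs_of_integrable_mul_sq (hw : 0 ≤ᵐ[μ] w) (hwi : Integrable w μ)
    (hg : AEStronglyMeasurable g μ) (hwg : Integrable (fun x => w x * g x ^ 2) μ) :
    Integrable (fun x => w x * |g x|) μ := by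
  refine ((memLp_two_sqrt_of_integrable hw hwi).integrable_mul
    (memLp_two_sqrt_mul_abs_of_integrable_mul_sq hw hwi.1 hg hwg)).congr ?_
  filter_upwards [hw] with x hx
  simp only [Pi.mul_apply, ← mul_assoc, Real.mul_self_sqrt hx]

theorem integral_mul_abs_le_sqrt_mul_sqrt (hw : 0 ≤ᵐ[μ] w) (hwi : Integrable w μ)
    (hg : AEStronglyMeasurable g μ) (hwg : Integrable (fun x => w x * g x ^ 2) μ) :
    ∫ x, w x * |g x| ∂μ ≤ √(∫ x, w x ∂μ) * √(∫ x, w x * g x ^ 2 ∂μ) := by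
  have hHolder := integral_mul_le_Lp_mul_Lq_of_nonneg Real.HolderConjugate.two_two
    (Filter.Eventually.of_forall fun x => Real.sqrt_nonneg (w x))
    (Filter.Eventually.of_forall fun x => mul_nonneg (Real.sqrt_nonneg (w x)) (abs_nonneg (g x)))
    (by simpa using memLp_two_sqrt_of_integrable hw hwi)
    (by simpa using memLp_two_sqrt_mul_abs_of_integrable_mul_sq hw hwi.1 hg hwg)
  have hprod : ∫ x, √(w x) * (√(w x) * |g x|) ∂μ = ∫ x, w x * |g x| ∂μ := by
    refine integral_congr_ae ?_
    filter_upwards [hw] with x hx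
    rw [← mul_assoc, Real.mul_self_sqrt hx]
  have hweight : ∫ x, √(w x) ^ (2 : ℝ) ∂μ = ∫ x, w x ∂μ := by
    refine integral_congr_ae ?_
    filter_upwards [hw] with x hx
    rw [Real.rpow_two, Real.sq_sqrt hx]
  have hweighted_sq : ∫ x, (√(w x) * |g x|) ^ (2 : ℝ) ∂μ = ∫ x, w x * g x ^ 2 ∂μ := by
    refine integral_congr_ae ?_
    filter_upwards [hw] with x hx
    rw [Real.rpow_two, mul_pow, Real.sq_sqrt hx, sq_abs]
  rwa [hprod, hweight, hweighted_sq, ← Real.sqrt_eq_rpow, ← Real.sqrt_eq_rpow] at hHolder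

end WeightedCauchySchwarz

theorem abs_le_abs_sub_of_neg_of_nonneg {a b : ℝ} (hb : b < 0) (ha : 0 ≤ a) : |b| ≤ |b - a| := by
  rw [abs_of_neg hb, abs_of_neg (by linarith)]
  linarith

theorem mass_excess_entropy_production_bound_general {d : ℕ} (Ω : Set (Fin d → ℝ))
    (hΩ : MeasurableSet Ω)
    (f : (Fin d → ℝ) → ℝ → ℝ) (m u : (Fin d → ℝ) → ℝ)
    (hm_meas : Measurable m) (hu_meas : Measurable u)
    (hf_meas : Measurable fun x => f x (u x))
    (hu_nonneg : ∀ x ∈ Ω, 0 ≤ u x)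
    (hu_int : IntegrableOn u Ω)
    (hu_mass : ∫ x in Ω, u x = 1)
    (hf_neg : ∀ x ∈ Ω, ∀ ξ : ℝ, m x < ξ → f x ξ < 0)
    (lam : ℝ) (hlam : 0 < lam)
    (hlow : ∀ x ∈ Ω, ∀ ξ : ℝ, m x < ξ → lam * (ξ - m x) ≤ ξ * |f x ξ|)
    (a : ℝ) (ha : 0 ≤ a)
    (hint : IntegrableOn (fun x => u x * (f x (u x) - a) ^ 2)
      {x ∈ Ω | m x < u x}) :
    ∫ x in {x ∈ Ω | m x < u x}, (u x - m x)
      ≤ lam⁻¹ *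
        Real.sqrt (∫ x in {x ∈ Ω | m x < u x}, u x * (f x (u x) - a) ^ 2) := by
  set S := {x ∈ Ω | m x < u x}
  have hS_ae : ∀ᵐ x ∂volume.restrict S, x ∈ S :=
    ae_restrict_mem (hΩ.inter (measurableSet_lt hm_meas hu_meas))
  have hu_nonneg_S : 0 ≤ᵐ[volume.restrict S] u := hS_ae.mono fun x hx => hu_nonneg x hx.1
  have hu_int_S : IntegrableOn u S := hu_int.mono_set fun x hx => hx.1
  have hf_sub_meas : AEStronglyMeasurable (fun x => f x (u x) - a) (volume.restrict S) :=
    (hf_meas.sub measurable_const).aestronglyMeasurable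
  have hmass_S : ∫ x in S, u x ≤ 1 :=
    hu_mass ▸ setIntegral_mono_set hu_int ((ae_restrict_mem hΩ).mono hu_nonneg)
      (Filter.Eventually.of_forall fun x hx => hx.1)
  have hpointwise : ∀ x ∈ S, u x - m x ≤ lam⁻¹ * (u x * |f x (u x) - a|) :=
    fun x ⟨hxΩ, hmu⟩ => (le_inv_mul_iff₀ hlam).2 <| (hlow x hxΩ _ hmu).trans <|
      mul_le_mul_of_nonneg_left (abs_le_abs_sub_of_neg_of_nonneg (hf_neg x hxΩ _ hmu) ha)
        (hu_nonneg x hxΩ)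
  calc ∫ x in S, (u x - m x)
      ≤ ∫ x in S, lam⁻¹ * (u x * |f x (u x) - a|) := by
        refine integral_mono_of_nonneg (hS_ae.mono fun x hx => sub_nonneg.2 hx.2.le)
          ((integrable_mul_abs_of_integrable_mul_sq hu_nonneg_S hu_int_S hf_sub_meas
            hint).const_mul _) (hS_ae.mono hpointwise)
    _ = lam⁻¹ * ∫ x in S, u x * |f x (u x) - a| := integral_const_mul _ _
    _ ≤ lam⁻¹ * (√(∫ x in S, u x) * √(∫ x in S, u x * (f x (u x) - a) ^ 2)) := by
        gcongr
        exact integral_mul_abs_le_sqrt_mul_sqrt hu_nonneg_S hu_int_S hf_sub_meas hint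
    _ ≤ lam⁻¹ * √(∫ x in S, u x * (f x (u x) - a) ^ 2) := by
        gcongr
        exact mul_le_of_le_one_left (Real.sqrt_nonneg _) (Real.sqrt_le_one.2 hmass_S)

/-- Key estimate of Lemma 2.11: if `ξ |f(x,ξ)| ≥ λ (ξ - m(x))` for `ξ > m(x)`,
`u` and `m` are probability densities and `a ≥ 0`, then
`∫_{[u>m]} (u-m) ≤ λ⁻¹ (∫_{[u>m]} u (f(x,u)-a)²)^{1/2}`. -/
theorem mass_excess_entropy_production_bound {d : ℕ} (Ω : Set (Fin d → ℝ))
    (hΩ : MeasurableSet Ω) (hΩbd : Bornology.IsBounded Ω)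
    (f : (Fin d → ℝ) → ℝ → ℝ) (m u : (Fin d → ℝ) → ℝ)
    (hm_meas : Measurable m) (hu_meas : Measurable u)
    (hf_meas : Measurable fun x => f x (u x))
    (hm_nonneg : ∀ x ∈ Ω, 0 ≤ m x) (hu_nonneg : ∀ x ∈ Ω, 0 ≤ u x)
    (hm_int : IntegrableOn m Ω) (hu_int : IntegrableOn u Ω)
    (hm_mass : ∫ x in Ω, m x = 1) (hu_mass : ∫ x in Ω, u x = 1)
    (hf_eq : ∀ x ∈ Ω, f x (m x) = 0)
    (hf_neg : ∀ x ∈ Ω, ∀ ξ : ℝ, m x < ξ → f x ξ < 0)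
    (lam : ℝ) (hlam : 0 < lam)
    (hlow : ∀ x ∈ Ω, ∀ ξ : ℝ, m x < ξ → lam * (ξ - m x) ≤ ξ * |f x ξ|)
    (a : ℝ) (ha : 0 ≤ a)
    (hint : IntegrableOn (fun x => u x * (f x (u x) - a) ^ 2)
      {x ∈ Ω | m x < u x}) :
    ∫ x in {x ∈ Ω | m x < u x}, (u x - m x)
      ≤ lam⁻¹ *
        Real.sqrt (∫ x in {x ∈ Ω | m x < u x}, u x * (f x (u x) - a) ^ 2) :=
  mass_excess_entropy_production_bound_general Ω hΩ f m u hm_meas hu_meas hf_meas hu_nonneg hu_int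
    hu_mass hf_neg lam hlam hlow a ha hint
end
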